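/- For Rule 38 on a ring of size n ≥ 2, the all-zeros configuration 0^n is the unique parallel fixed point, and it is isolated under single-cell updates: no non-zero configuration can reach 0^n because any single-cell update of a configuration containing at least one 1 results in a configuration still containing at least one 1. -/

import Mathlib

/-- Single-cell update: replace the state of cell `i` by the local rule applied
to its neighborhood on the ring `ZMod n`. -/
def eupdate (n : ℕ) (f : Bool → Bool → Bool → Bool) (x : ZMod n → Bool) (i : ZMod n) :
    ZMod n → Bool :=
  Function.update x i (f (x (i - 1)) (x i) (x (i + 1)))

/-- Synchronous (parallel) step. -/
def parStep (n : ℕ) (f : Bool → Bool → Bool → Bool) (x : ZMod n → Bool) : ZMod n → Bool :=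
  fun i => f (x (i - 1)) (x i) (x (i + 1))

/-- `x` is a fixed point of the parallel dynamics. -/
def IsFixedConfig (n : ℕ) (f : Bool → Bool → Bool → Bool) (x : ZMod n → Bool) : Prop :=
  ∀ i : ZMod n, f (x (i - 1)) (x i) (x (i + 1)) = x i

/-- One full sequential step under the sequential update mode `μ`
(a permutation of the cells): update cells one at a time in the order
`μ 0, μ 1, …, μ (n-1)`. -/
def seqStep (n : ℕ) (f : Bool → Bool → Bool → Bool) (μ : Fin n ≃ ZMod n)
    (x : ZMod n → Bool) : ZMod n → Bool :=
  (List.finRange n).foldl (fun y k => eupdate n f y (μ k)) x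

/-- One full sequential step under the descending order `(n-1, n-2, …, 0)`. -/
def seqStepDesc (n : ℕ) (f : Bool → Bool → Bool → Bool) (x : ZMod n → Bool) : ZMod n → Bool :=
  ((List.range n).reverse).foldl (fun y k => eupdate n f y (k : ZMod n)) x

/-- One full sequential step under the ascending order `(0, 1, …, n-1)`. -/
def seqStepAsc (n : ℕ) (f : Bool → Bool → Bool → Bool) (x : ZMod n → Bool) : ZMod n → Bool :=
  (List.range n).foldl (fun y k => eupdate n f y (k : ZMod n)) x

def rule38 : Bool → Bool → Bool → Bool
  | true, true, true => false
  | true, true, false => false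
  | true, false, true => true
  | true, false, false => false
  | false, true, true => false
  | false, true, false => true
  | false, false, true => true
  | false, false, false => false

/-! A configuration with a 1 cannot be a parallel fixed point: a fixed 1 needs a 0 on its left
(`f(1,1,c) = 0`), and that 0 sees a 1 on its right, so it turns into 1 (`f(a,0,1) = 1`).
A single-cell update at `i` touches only cell `i`; if it erases a 1 there, then `f(0,1,0) = 1`
forces a 1 at a neighbour `i ± 1 ≠ i`, which survives. -/

section LocalRule

variable {n : ℕ} {f : Bool → Bool → Bool → Bool}

theorem isFixedConfig_const_false (hf : f false false false = false) :
    IsFixedConfig n f fun _ => false :=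
  fun _ => hf

theorem eq_false_of_isFixedConfig (hf₁ : ∀ c, f true true c = false)
    (hf₂ : ∀ a, f a false true = true) {x : ZMod n → Bool} (hx : IsFixedConfig n f x)
    (i : ZMod n) : x i = false := by
  by_contra hi
  rw [Bool.not_eq_false] at hi
  have hleft : x (i - 1) = false := by
    by_contra hl
    rw [Bool.not_eq_false] at hl
    simpa [hl, hi, hf₁] using hx i
  simpa [hleft, hi, hf₂] using hx (i - 1)

theorem exists_eupdate_eq_true (hn : (1 : ZMod n) ≠ 0) (hf : f false true false = true)
    {x : ZMod n → Bool} (i : ZMod n) {j : ZMod n} (hj : x j = true) :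
    ∃ k, eupdate n f x i k = true := by
  by_cases hji : j = i
  swap
  · exact ⟨j, by rw [eupdate, Function.update_of_ne hji, hj]⟩
  subst hji
  by_cases hl : x (j - 1) = true
  · exact ⟨j - 1, by rw [eupdate, Function.update_of_ne (sub_eq_self.not.mpr hn), hl]⟩
  by_cases hr : x (j + 1) = true
  · exact ⟨j + 1, by rw [eupdate, Function.update_of_ne (add_ne_left.mpr hn), hr]⟩
  refine ⟨j, ?_⟩
  rw [eupdate, Function.update_self, hj, eq_false_of_ne_true hl, eq_false_of_ne_true hr, hf]

end LocalRule

theorem rule38_zero_isolated (n : ℕ) (hn : 2 ≤ n) :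
    (∀ x : ZMod n → Bool, IsFixedConfig n rule38 x ↔ x = fun _ => false) ∧
    (∀ x : ZMod n → Bool, ∀ i : ZMod n,
      (∃ j : ZMod n, x j = true) → ∃ j : ZMod n, (eupdate n rule38 x i) j = true) := by
  have hone : (1 : ZMod n) ≠ 0 := by
    have : Fact (1 < n) := ⟨hn⟩
    exact one_ne_zero
  refine ⟨fun x => ⟨fun hx => ?_, fun hx => hx ▸ isFixedConfig_const_false rfl⟩, ?_⟩
  · funext i
    exact eq_false_of_isFixedConfig (by decide) (by decide) hx i
  · rintro x i ⟨j, hj⟩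
    exact exists_eupdate_eq_true hone rfl i hj
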